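/- arXiv:1401.8093 — 3 statements merged into one kernel-verified Lean document; each statement's English description precedes it below -/
import Mathlib

section
/- Let u: A → B and v: B → C be continuous linear maps between Fréchet spaces with v∘u = 0. If the image of v is closed in C, then the image of the transpose v': C' → B' is weak-* closed in B'. -/
/-!
Without a Hausdorff assumption, the image of the transpose is the annihilator of
`{b | v b is inseparable from 0}`, an intersection of weak-* closed hyperplanes. A functional `λ`
in this annihilator factors as `g ∘ v` with `g` linear on the range of `v`; `g` is continuous
because `v` is open onto its range up to inseparability (open mapping theorem: Baire category in
the complete range, then successive approximation in the complete space `B`), and Hahn–Banach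
extends `g` to all of `C`.
-/

open Filter Set Topology Pointwise Function

namespace LinearMap

variable {𝕜 E F : Type*} [NontriviallyNormedField 𝕜]
  [AddCommGroup E] [Module 𝕜 E] [TopologicalSpace E] [ContinuousSMul 𝕜 E]
  [AddCommGroup F] [Module 𝕜 F] [TopologicalSpace F] [ContinuousConstSMul 𝕜 F] [BaireSpace F]

theorem nonempty_interior_closure_image_of_surjective (f : E →ₗ[𝕜] F) (hf : Surjective f)
    {V : Set E} (hV : V ∈ 𝓝 0) : (interior (closure (f '' V))).Nonempty := by
  obtain ⟨c, hc0, hc1⟩ := NormedField.exists_norm_lt_one 𝕜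
  have hc : ∀ n : ℕ, c ^ n ≠ 0 := fun n => pow_ne_zero n (norm_pos_iff.mp hc0)
  have hcover : ⋃ n : ℕ, (c ^ n • ·) ⁻¹' closure (f '' V) = univ := by
    refine eq_univ_of_forall fun y => ?_
    obtain ⟨x, rfl⟩ := hf y
    have hx : Tendsto (fun n : ℕ => c ^ n • x) atTop (𝓝 0) := by
      simpa using (tendsto_pow_atTop_nhds_zero_of_norm_lt_one hc1).smul_const x
    obtain ⟨n, hn⟩ := (hx.eventually_mem hV).exists
    exact mem_iUnion.2 ⟨n, subset_closure ⟨_, hn, map_smul f _ x⟩⟩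
  obtain ⟨n, hn⟩ := nonempty_interior_of_iUnion_of_closed
    (fun n => isClosed_closure.preimage (continuous_const_smul _)) hcover
  rw [preimage_smul₀ (hc n), interior_smul₀ (inv_ne_zero (hc n))] at hn
  exact smul_set_nonempty.mp hn

theorem closure_image_mem_nhds_zero_of_surjective [IsTopologicalAddGroup E]
    [IsTopologicalAddGroup F] (f : E →ₗ[𝕜] F) (hf : Surjective f)
    {U : Set E} (hU : U ∈ 𝓝 0) : closure (f '' U) ∈ 𝓝 0 := by
  obtain ⟨V, hV, hVU⟩ := exists_nhds_half_neg hU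
  obtain ⟨y, hy⟩ := f.nonempty_interior_closure_image_of_surjective hf hV
  have hnhds : (· + y) ⁻¹' interior (closure (f '' V)) ∈ 𝓝 0 :=
    (continuous_add_const y).continuousAt.preimage_mem_nhds
      (by simpa using isOpen_interior.mem_nhds hy)
  refine mem_of_superset hnhds fun z hz => ?_
  simpa using map_mem_closure₂ continuous_sub (interior_subset hz) (interior_subset hy)
    (by rintro _ ⟨a, ha, rfl⟩ _ ⟨b, hb, rfl⟩; exact ⟨a - b, hVU a ha b hb, map_sub f a b⟩)

end LinearMap

section Descent

variable {G : Type*} [AddCommGroup G]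

theorem exists_antitone_basis_nhds_zero_closure_subset [TopologicalSpace G]
    [IsTopologicalAddGroup G] [FirstCountableTopology G] {U : Set G} (hU : U ∈ 𝓝 0) :
    ∃ D : ℕ → Set G, (𝓝 0).HasAntitoneBasis D ∧ (∀ n, D (n + 1) + D (n + 1) ⊆ D n) ∧
      closure (D 0) ⊆ U := by
  obtain ⟨D, hD, hadd⟩ := IsTopologicalAddGroup.exists_antitone_basis_nhds_zero G
  obtain ⟨N, hN⟩ := hD.mem_iff.1 hU
  refine ⟨fun n => D (n + (N + 1)),
    hD.comp_mono (monotone_id.add_const _) (tendsto_add_atTop_nat _), fun n => ?_, ?_⟩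
  · simpa only [add_right_comm n 1] using hadd (n + (N + 1))
  · refine (closure_subset_add_self_of_mem_nhds_zero (hD.mem _)).trans ?_
    simpa only [zero_add] using (hadd N).trans hN

theorem sum_mem_of_hasAntitoneBasis [TopologicalSpace G] {D : ℕ → Set G}
    (hD : (𝓝 (0 : G)).HasAntitoneBasis D) (hadd : ∀ n, D (n + 1) + D (n + 1) ⊆ D n)
    {x : ℕ → G} (hx : ∀ n, x n ∈ D (n + 1)) (t : Finset ℕ) {n : ℕ} (ht : ∀ k ∈ t, n ≤ k) :
    ∑ k ∈ t, x k ∈ D n := by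
  classical
  induction t using Finset.induction_on_min generalizing n with
  | empty => exact mem_of_mem_nhds (hD.mem n)
  | insert a t hat ih =>
    rw [Finset.sum_insert fun ha => (hat a ha).false]
    have hsum : x a + ∑ k ∈ t, x k ∈ D a :=
      hadd a (add_mem_add (hx a) (ih fun k hk => hat k hk))
    exact hD.antitone (ht a (Finset.mem_insert_self a t)) hsum

variable {H 𝓕 : Type*} [AddCommGroup H] [TopologicalSpace H] [IsTopologicalAddGroup H]
  [FunLike 𝓕 G H] [AddMonoidHomClass 𝓕 G H]

theorem tendsto_nhds_zero_of_mem_closure_image [TopologicalSpace G] {D : ℕ → Set G}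
    (hD : (𝓝 (0 : G)).HasAntitoneBasis D) (f : 𝓕) (hf : Continuous f) {y : ℕ → H}
    (hy : ∀ n, y n ∈ closure (f '' D n)) : Tendsto y atTop (𝓝 0) := by
  refine (closed_nhds_basis (0 : H)).tendsto_right_iff.2 fun N ⟨hN, hNc⟩ => ?_
  have hfN : f ⁻¹' N ∈ 𝓝 0 :=
    hf.continuousAt.preimage_mem_nhds (by rwa [map_zero] : N ∈ 𝓝 (f 0))
  filter_upwards [hD.eventually_subset hfN] with n hn
  exact closure_minimal (image_subset_iff.2 hn) hNc (hy n)

variable [UniformSpace G] [IsUniformAddGroup G] [CompleteSpace G]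

theorem summable_of_hasAntitoneBasis {D : ℕ → Set G}
    (hD : (𝓝 (0 : G)).HasAntitoneBasis D) (hadd : ∀ n, D (n + 1) + D (n + 1) ⊆ D n)
    {x : ℕ → G} (hx : ∀ n, x n ∈ D (n + 1)) : Summable x := by
  refine summable_iff_vanishing.2 fun e he => ?_
  obtain ⟨n, hn⟩ := hD.mem_iff.1 he
  refine ⟨Finset.range n, fun t ht => hn (sum_mem_of_hasAntitoneBasis hD hadd hx t fun k hk => ?_)⟩
  simpa using Finset.disjoint_left.1 ht hk

/-- Successive approximation: starting from `y₀ = y`, pick `xₙ ∈ D (n + 1)` with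
`yₙ₊₁ = yₙ - f xₙ ∈ closure (f '' D (n + 2))`; then `∑ xₙ` converges in `U` and `f` maps it to a
point inseparable from `y`. -/
theorem eventually_exists_inseparable_of_closure_image_mem_nhds [FirstCountableTopology G]
    (f : 𝓕) (hfc : Continuous f) (hf : ∀ U ∈ 𝓝 (0 : G), closure (f '' U) ∈ 𝓝 0)
    {U : Set G} (hU : U ∈ 𝓝 0) : ∀ᶠ y in 𝓝 0, ∃ x ∈ U, Inseparable (f x) y := by
  obtain ⟨D, hD, hadd, hDU⟩ := exists_antitone_basis_nhds_zero_closure_subset hU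
  have step : ∀ n, ∀ y ∈ closure (f '' D (n + 1)),
      ∃ x ∈ D (n + 1), y - f x ∈ closure (f '' D (n + 2)) := by
    intro n y hy
    obtain ⟨_, ⟨x, hx, rfl⟩, hxy⟩ :=
      mem_closure_iff_nhds_zero.1 hy _ (neg_mem_nhds_zero H (hf _ (hD.mem _)))
    exact ⟨x, hx, by simpa using hxy⟩
  choose! g hgD hg using step
  filter_upwards [hf _ (hD.mem 1)] with y hy
  set ys : ℕ → H := fun n => Nat.rec y (fun k yk => yk - f (g k yk)) n
  have hys : ∀ n, ys n ∈ closure (f '' D (n + 1)) := by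
    intro n
    induction n with
    | zero => exact hy
    | succ n ih => exact hg n (ys n) ih
  have hx : ∀ n, g n (ys n) ∈ D (n + 1) := fun n => hgD n (ys n) (hys n)
  obtain ⟨s, hs⟩ := summable_of_hasAntitoneBasis hD hadd hx
  have hpartial : ∀ n, ∑ i ∈ Finset.range n, f (g i (ys i)) = y - ys n := fun n =>
    (Finset.sum_congr rfl fun i _ => (sub_sub_cancel _ _).symm).trans (Finset.sum_range_sub' ys n)
  have hys0 : Tendsto ys atTop (𝓝 0) := tendsto_nhds_zero_of_mem_closure_image hD f hfc
    fun n => closure_mono (image_mono (hD.antitone n.le_succ)) (hys n)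
  refine ⟨s, hDU (mem_closure_of_tendsto hs.tendsto_sum_nat (Eventually.of_forall fun n =>
    sum_mem_of_hasAntitoneBasis hD hadd hx _ fun k _ => k.zero_le)), ?_⟩
  refine tendsto_nhds_unique_inseparable (hs.map f hfc).tendsto_sum_nat ?_
  simpa [hpartial] using tendsto_const_nhds.sub hys0

end Descent

theorem ContinuousLinearMap.exists_comp_eq_of_eventually_inseparable {R E F M : Type*} [Ring R]
    [AddCommGroup E] [Module R E] [TopologicalSpace E]
    [AddCommGroup F] [Module R F] [TopologicalSpace F] [IsTopologicalAddGroup F]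
    [AddCommGroup M] [Module R M] [TopologicalSpace M] [IsTopologicalAddGroup M]
    (w : E →L[R] F) (hw : Surjective w)
    (hopen : ∀ U ∈ 𝓝 (0 : E), ∀ᶠ y in 𝓝 0, ∃ x ∈ U, Inseparable (w x) y)
    (l : E →L[R] M) (hl : ∀ x, Inseparable (w x) 0 → l x = 0) :
    ∃ g : F →L[R] M, g.comp w = l := by
  have hl' : ∀ x x', Inseparable (w x) (w x') → l x = l x' := fun x x' h => by
    rw [← sub_eq_zero, ← map_sub]
    apply hl
    rwa [addGroup_inseparable_iff, sub_zero, map_sub, ← addGroup_inseparable_iff]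
  have hker : LinearMap.ker (w : E →ₗ[R] F) ≤ LinearMap.ker (l : E →ₗ[R] M) := fun x hx =>
    hl x ((LinearMap.mem_ker.1 hx : w x = 0) ▸ .rfl)
  let g : F →ₗ[R] M := (LinearMap.ker (w : E →ₗ[R] F)).liftQ l hker ∘ₗ
    (w.toLinearMap.quotKerEquivOfSurjective hw).symm.toLinearMap
  have hg : ∀ x, g (w x) = l x := fun x => by
    simp only [g, LinearMap.comp_apply, LinearEquiv.coe_coe]
    rw [← ContinuousLinearMap.coe_coe w, LinearMap.quotKerEquivOfSurjective_symm_apply,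
      Submodule.liftQ_apply, ContinuousLinearMap.coe_coe]
  have hgc : Continuous g := by
    refine continuous_of_continuousAt_zero g fun N hN => mem_map.2 ?_
    rw [map_zero] at hN
    filter_upwards [hopen _ (l.continuous.continuousAt.preimage_mem_nhds
      (by rwa [map_zero] : N ∈ 𝓝 (l 0)))] with y ⟨x, hx, hxy⟩
    obtain ⟨x', rfl⟩ := hw y
    simpa [hg, hl' x x' hxy] using hx
  exact ⟨⟨g, hgc⟩, ContinuousLinearMap.ext hg⟩

open scoped ComplexOrder in
theorem locallyConvexSpace_RCLike_iff_real {K E : Type*} [RCLike K] [AddCommGroup E]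
    [Module K E] [Module ℝ E] [IsScalarTower ℝ K E] [TopologicalSpace E]
    [IsTopologicalAddGroup E] : LocallyConvexSpace K E ↔ LocallyConvexSpace ℝ E := by
  simp only [locallyConvexSpace_iff_zero, convex_RCLike_iff_convex_real]

namespace ContinuousLinearMap

variable {𝕜 B C : Type*} [NontriviallyNormedField 𝕜]
  [AddCommGroup B] [Module 𝕜 B] [UniformSpace B] [IsUniformAddGroup B] [ContinuousSMul 𝕜 B]
  [CompleteSpace B] [FirstCountableTopology B]
  [AddCommGroup C] [Module 𝕜 C] [UniformSpace C] [IsUniformAddGroup C] [ContinuousSMul 𝕜 C]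
  [CompleteSpace C] [FirstCountableTopology C]

theorem eventually_exists_inseparable_rangeRestrict (v : B →L[𝕜] C)
    (hclosed : IsClosed (range v)) {U : Set B} (hU : U ∈ 𝓝 0) :
    ∀ᶠ y in 𝓝 0, ∃ x ∈ U, Inseparable (v.rangeRestrict x) y := by
  have := IsUniformAddGroup.uniformity_countably_generated (α := C)
  have : BaireSpace (LinearMap.range (v : B →ₗ[𝕜] C)) :=
    have hclosed' : IsClosed (LinearMap.range (v : B →ₗ[𝕜] C) : Set C) := by
      rwa [LinearMap.coe_range]
    have := hclosed'.isClosedEmbedding_subtypeVal.IsCompletelyPseudoMetrizableSpace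
    inferInstance
  exact eventually_exists_inseparable_of_closure_image_mem_nhds v.rangeRestrict
    v.rangeRestrict.continuous (fun _ => LinearMap.closure_image_mem_nhds_zero_of_surjective
      (v.rangeRestrict : B →ₗ[𝕜] LinearMap.range (v : B →ₗ[𝕜] C))
      (LinearMap.surjective_rangeRestrict _)) hU

theorem exists_eq_comp_iff_of_isClosed_range [IsRCLikeNormedField 𝕜] [PolynormableSpace 𝕜 C]
    (v : B →L[𝕜] C) (hclosed : IsClosed (range v)) (l : B →L[𝕜] 𝕜) :
    (∃ γ : C →L[𝕜] 𝕜, ∀ b, l b = γ (v b)) ↔ ∀ b, Inseparable (v b) 0 → l b = 0 := by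
  refine ⟨fun ⟨γ, hγ⟩ b hb => by simpa [hγ] using (hb.map γ.continuous).eq, fun hl => ?_⟩
  obtain ⟨g, hg⟩ := v.rangeRestrict.exists_comp_eq_of_eventually_inseparable
    (LinearMap.surjective_rangeRestrict _)
    (fun _ => v.eventually_exists_inseparable_rangeRestrict hclosed)
    l fun b hb => hl b (by simpa using hb.map continuous_subtype_val)
  obtain ⟨γ, hγ⟩ := StrongDual.exists_extension _ g
  exact ⟨γ, fun b => by rw [← hg, comp_apply, ← hγ]; rfl⟩

end ContinuousLinearMap

theorem transpose_image_weakstar_closed_general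
    {B C : Type*}
    [AddCommGroup B] [Module ℂ B]
    [UniformSpace B] [IsUniformAddGroup B] [ContinuousSMul ℂ B]
    [CompleteSpace B] [FirstCountableTopology B]
    [AddCommGroup C] [Module ℂ C] [Module ℝ C] [IsScalarTower ℝ ℂ C]
    [UniformSpace C] [IsUniformAddGroup C] [ContinuousSMul ℂ C] [ContinuousSMul ℝ C]
    [CompleteSpace C] [FirstCountableTopology C] [LocallyConvexSpace ℝ C]
    (v : B →L[ℂ] C)
    (hclosed : IsClosed (Set.range v)) :
    IsClosed {lam : WeakDual ℂ B | ∃ γ : C →L[ℂ] ℂ, ∀ b : B, lam b = γ (v b)} := by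
  have : PolynormableSpace ℂ C :=
    open scoped ComplexOrder in
    have : LocallyConvexSpace ℂ C := locallyConvexSpace_RCLike_iff_real.2 ‹_›
    inferInstance
  have hset : {lam : WeakDual ℂ B | ∃ γ : C →L[ℂ] ℂ, ∀ b : B, lam b = γ (v b)} =
      ⋂ (b : B) (_ : Inseparable (v b) 0), {lam : WeakDual ℂ B | lam b = 0} := by
    ext lam
    simp only [mem_ofPred_eq, mem_iInter]
    exact v.exists_eq_comp_iff_of_isClosed_range hclosed lam
  rw [hset]
  exact isClosed_iInter fun b => isClosed_iInter fun _ =>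
    isClosed_eq (WeakDual.eval_continuous b) continuous_const

/-- If `v : B → C` (part of a complex `A →u B →v C` of Fréchet spaces) has closed image
in `C`, then the image of its transpose `v' : C' → B'` is weak-* closed in `B'`. -/
theorem transpose_image_weakstar_closed
    {A B C : Type*}
    [AddCommGroup A] [Module ℂ A] [Module ℝ A] [IsScalarTower ℝ ℂ A]
    [UniformSpace A] [IsUniformAddGroup A] [ContinuousSMul ℂ A] [ContinuousSMul ℝ A]
    [CompleteSpace A] [FirstCountableTopology A] [LocallyConvexSpace ℝ A]
    [AddCommGroup B] [Module ℂ B] [Module ℝ B] [IsScalarTower ℝ ℂ B]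
    [UniformSpace B] [IsUniformAddGroup B] [ContinuousSMul ℂ B] [ContinuousSMul ℝ B]
    [CompleteSpace B] [FirstCountableTopology B] [LocallyConvexSpace ℝ B]
    [AddCommGroup C] [Module ℂ C] [Module ℝ C] [IsScalarTower ℝ ℂ C]
    [UniformSpace C] [IsUniformAddGroup C] [ContinuousSMul ℂ C] [ContinuousSMul ℝ C]
    [CompleteSpace C] [FirstCountableTopology C] [LocallyConvexSpace ℝ C]
    (u : A →L[ℂ] B) (v : B →L[ℂ] C) (huv : ∀ a : A, v (u a) = 0)
    (hclosed : IsClosed (Set.range v)) :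
    IsClosed {lam : WeakDual ℂ B | ∃ γ : C →L[ℂ] ℂ, ∀ b : B, lam b = γ (v b)} :=
  transpose_image_weakstar_closed_general v hclosed
end

section
/- Dimension principle (smooth model case): let μ be a distribution (current) of bidegree (*, q) on an open set of ℂⁿ that is a finite sum of pushforwards under holomorphic maps of products of principal value factors 1/z_j^{m_j} and residue factors ∂̄(1/z_j^{m_j}) with a smooth compactly supported form, in the special case of an elementary current τ = ∂̄(1/z₁^{m₁}) ∧ ⋯ ∧ ∂̄(1/z_r^{m_r}) ∧ γ/(z_{r+1}^{m_{r+1}}⋯z_n^{m_n}). Then τ has support contained in {z₁ = ⋯ = z_r = 0}, and τ = 0 if r > q where q is the number of residue factors... Concretely: the elementary current τ has bidegree (*, r) and support on a variety of codimension r, and if a pseudomeromorphic current of bidegree (*, q) has support on an analytic set of codimension > q then it vanishes — verify this for the elementary current: ∂̄(1/z₁) ∧ γ vanishes on any test form supported away from {z₁ = 0}, and z̄₁ · ∂̄(1/z₁) = 0 as well as dz̄₁ ∧ ∂̄(1/z₁) = 0. -/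
open MeasureTheory Filter Set

/-- The `j`-th antiholomorphic derivative `∂φ/∂z̄_j` of a function on `ℂⁿ`. -/
noncomputable def dbarCoord {n : ℕ} (j : Fin n) (φ : (Fin n → ℂ) → ℂ)
    (z : Fin n → ℂ) : ℂ :=
  (1/2 : ℂ) * (fderiv ℝ φ z (Pi.single j 1) + Complex.I * fderiv ℝ φ z (Pi.single j Complex.I))

lemma integral_fderiv_apply_eq_zero {n : ℕ} {F : (Fin n → ℂ) → ℂ}
    (hF : ContDiff ℝ (⊤ : ℕ∞) F) (hFc : HasCompactSupport F) (v : Fin n → ℂ) :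
    ∫ z : Fin n → ℂ, fderiv ℝ F z v = 0 := by
  have hd : Differentiable ℝ F := hF.differentiable (by simp)
  have hcont : Continuous fun z : Fin n → ℂ => fderiv ℝ F z v :=
    (hF.continuous_fderiv (by simp)).clm_apply continuous_const
  have hsupp : HasCompactSupport fun z : Fin n → ℂ => fderiv ℝ F z v :=
    (hFc.fderiv ℝ).comp_left (g := fun L : (Fin n → ℂ) →L[ℝ] ℂ => L v) rfl
  have h := integral_mul_fderiv_eq_neg_fderiv_mul_of_integrable (μ := volume)
      (f := fun _ : Fin n → ℂ => (1:ℂ)) (g := F) (v := v)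
      ?_ ?_ ?_ (fun x _ => differentiableAt_const _) (fun x _ => hd x)
  · simpa [fderiv_const] using h
  · simp [fderiv_const]
  · simpa using hcont.integrable_of_hasCompactSupport hsupp
  · simpa using (hF.continuous).integrable_of_hasCompactSupport hFc

lemma contDiff_dbar_integrand {n : ℕ} {F : (Fin n → ℂ) → ℂ}
    (hF : ContDiff ℝ (⊤ : ℕ∞) F) (hFc : HasCompactSupport F) (v : Fin n → ℂ) :
    Integrable (fun z : Fin n → ℂ => fderiv ℝ F z v) volume :=
  ((hF.continuous_fderiv (by simp)).clm_apply continuous_const).integrable_of_hasCompactSupport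
    ((hFc.fderiv ℝ).comp_left (g := fun L : (Fin n → ℂ) →L[ℝ] ℂ => L v) rfl)

lemma integral_dbarCoord_eq_zero {n : ℕ} (j : Fin n) {F : (Fin n → ℂ) → ℂ}
    (hF : ContDiff ℝ (⊤ : ℕ∞) F) (hFc : HasCompactSupport F) :
    ∫ z : Fin n → ℂ, dbarCoord j F z = 0 := by
  unfold dbarCoord
  rw [MeasureTheory.integral_const_mul, integral_add (contDiff_dbar_integrand hF hFc _)
      ((contDiff_dbar_integrand hF hFc _).const_mul _), MeasureTheory.integral_const_mul,
    integral_fderiv_apply_eq_zero hF hFc, integral_fderiv_apply_eq_zero hF hFc]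
  simp

lemma fderiv_comp_eval {n : ℕ} (j0 : Fin n) {h : ℂ → ℂ} {z : Fin n → ℂ}
    (hh : DifferentiableAt ℝ h (z j0)) (v : Fin n → ℂ) :
    fderiv ℝ (fun w => h (w j0)) z v = fderiv ℝ h (z j0) (v j0) := by
  have heq : (fun w : Fin n → ℂ => h (w j0))
      = h ∘ (ContinuousLinearMap.proj (R := ℝ) (φ := fun _ : Fin n => ℂ) j0) := rfl
  rw [heq, (hh.hasFDerivAt.comp z (ContinuousLinearMap.proj (R := ℝ) (φ := fun _ : Fin n => ℂ) j0).hasFDerivAt).fderiv]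
  simp

noncomputable def dbar1 (h : ℂ → ℂ) (w : ℂ) : ℂ :=
  (1/2 : ℂ) * (fderiv ℝ h w 1 + Complex.I * fderiv ℝ h w Complex.I)

lemma dbarCoord_comp_eval_same {n : ℕ} (j0 : Fin n) {h : ℂ → ℂ} {z : Fin n → ℂ}
    (hh : DifferentiableAt ℝ h (z j0)) :
    dbarCoord j0 (fun w => h (w j0)) z = dbar1 h (z j0) := by
  unfold dbarCoord dbar1
  rw [fderiv_comp_eval j0 hh, fderiv_comp_eval j0 hh]
  simp

lemma dbarCoord_comp_eval_ne {n : ℕ} {j j0 : Fin n} (hj : j ≠ j0) {h : ℂ → ℂ} {z : Fin n → ℂ}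
    (hh : DifferentiableAt ℝ h (z j0)) :
    dbarCoord j (fun w => h (w j0)) z = 0 := by
  unfold dbarCoord
  rw [fderiv_comp_eval j0 hh, fderiv_comp_eval j0 hh, Pi.single_eq_of_ne (Ne.symm hj),
    Pi.single_eq_of_ne (Ne.symm hj)]
  simp

lemma dbarCoord_mul {n : ℕ} (j : Fin n) {p q : (Fin n → ℂ) → ℂ} {z : Fin n → ℂ}
    (hp : DifferentiableAt ℝ p z) (hq : DifferentiableAt ℝ q z) :
    dbarCoord j (fun w => p w * q w) z = dbarCoord j p z * q z + p z * dbarCoord j q z := by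
  unfold dbarCoord
  rw [fderiv_fun_mul hp hq]
  simp only [ContinuousLinearMap.add_apply, ContinuousLinearMap.smul_apply, smul_eq_mul]
  ring

lemma dbar1_eq_zero_of_hasDerivAt {h : ℂ → ℂ} {w c : ℂ} (hh : HasDerivAt h c w) :
    dbar1 h w = 0 := by
  unfold dbar1
  rw [(hh.hasFDerivAt.restrictScalars ℝ).fderiv]
  simp only [ContinuousLinearMap.coe_restrictScalars', ContinuousLinearMap.smulRight_apply,
    ContinuousLinearMap.one_apply, ContinuousLinearMap.toSpanSingleton_apply, smul_eq_mul]
  have hI : Complex.I * Complex.I = -1 := Complex.I_mul_I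
  linear_combination (1/2 : ℂ) * c * hI

lemma dbar1_inv {w : ℂ} (hw : w ≠ 0) : dbar1 (fun y : ℂ => y⁻¹) w = 0 :=
  dbar1_eq_zero_of_hasDerivAt (hasDerivAt_inv hw)

lemma dbar1_congr {h1 h2 : ℂ → ℂ} {w : ℂ} (h : h1 =ᶠ[nhds w] h2) : dbar1 h1 w = dbar1 h2 w := by
  unfold dbar1
  rw [h.fderiv_eq]

lemma dbarCoord_eq_zero_of_eventually_zero {n : ℕ} (j : Fin n) {F : (Fin n → ℂ) → ℂ}
    {z : Fin n → ℂ} (h : F =ᶠ[nhds z] 0) : dbarCoord j F z = 0 := by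
  unfold dbarCoord
  rw [h.fderiv_eq]
  simp [show (0 : (Fin n → ℂ) → ℂ) = fun _ => 0 from rfl, fderiv_const]

lemma chi_zero_small {χ : ℝ → ℝ} {δ ε : ℝ} (h0 : ∀ x : ℝ, |x| < δ → χ x = 0) (hε : 0 < ε)
    {w : ℂ} (hw : ‖w‖ < δ * ε) : χ (‖w‖ / ε) = 0 := by
  apply h0
  rw [abs_of_nonneg (by positivity)]
  rw [div_lt_iff₀ hε]
  linarith [hw]

lemma contDiffAt_chi_abs {χ : ℝ → ℝ} {δ ε : ℝ} (hχ : ContDiff ℝ (⊤ : ℕ∞) χ)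
    (hδ : 0 < δ) (h0 : ∀ x : ℝ, |x| < δ → χ x = 0) (hε : 0 < ε) (w : ℂ) :
    ContDiffAt ℝ (⊤ : ℕ∞) (fun w : ℂ => (χ (‖w‖ / ε) : ℂ)) w := by
  by_cases hw : ‖w‖ < δ * ε
  · apply ContDiffAt.congr_of_eventuallyEq contDiffAt_const
    have hopen : IsOpen {v : ℂ | ‖v‖ < δ * ε} :=
      isOpen_lt continuous_norm continuous_const
    filter_upwards [hopen.mem_nhds hw] with v hv
    rw [chi_zero_small h0 hε hv, Complex.ofReal_zero]
  · have hw0 : w ≠ 0 := by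
      intro h
      apply hw
      simp [h]
      positivity
    have h1 : ContDiffAt ℝ (⊤ : ℕ∞) (fun w : ℂ => ‖w‖ / ε) w := by
        exact (contDiffAt_norm ℝ hw0).div_const ε
    exact Complex.ofRealCLM.contDiff.contDiffAt.comp w ((hχ.contDiffAt).comp w h1)

lemma contDiff_g {χ : ℝ → ℝ} {δ ε : ℝ} (hχ : ContDiff ℝ (⊤ : ℕ∞) χ)
    (hδ : 0 < δ) (h0 : ∀ x : ℝ, |x| < δ → χ x = 0) (hε : 0 < ε) :
    ContDiff ℝ (⊤ : ℕ∞) (fun w : ℂ => (χ (‖w‖ / ε) : ℂ) * w⁻¹) := by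
  rw [contDiff_iff_contDiffAt]
  intro w
  by_cases hw : ‖w‖ < δ * ε
  · apply ContDiffAt.congr_of_eventuallyEq contDiffAt_const
    have hopen : IsOpen {v : ℂ | ‖v‖ < δ * ε} :=
      isOpen_lt continuous_norm continuous_const
    filter_upwards [hopen.mem_nhds hw] with v hv
    rw [chi_zero_small h0 hε hv, Complex.ofReal_zero, zero_mul]
  · have hw0 : w ≠ 0 := by
      intro h; apply hw; simp [h]; positivity
    exact (contDiffAt_chi_abs hχ hδ h0 hε w).mul (contDiffAt_inv ℝ hw0)

lemma dbar1_mul {p q : ℂ → ℂ} {w : ℂ}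
    (hp : DifferentiableAt ℝ p w) (hq : DifferentiableAt ℝ q w) :
    dbar1 (fun y => p y * q y) w = dbar1 p w * q w + p w * dbar1 q w := by
  unfold dbar1
  rw [fderiv_fun_mul hp hq]
  simp only [ContinuousLinearMap.add_apply, ContinuousLinearMap.smul_apply, smul_eq_mul]
  ring

lemma dbar1_const {c w : ℂ} : dbar1 (fun _ => c) w = 0 := by
  unfold dbar1
  rw [fderiv_fun_const]
  simp

lemma part_c_integral {n : ℕ} (hn : 0 < n) {χ : ℝ → ℝ} (hχ : ContDiff ℝ (⊤ : ℕ∞) χ)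
    {δ : ℝ} (hδ : 0 < δ) (h0 : ∀ x : ℝ, |x| < δ → χ x = 0)
    {j : Fin n} (hj : j ≠ ⟨0, hn⟩) {φ : (Fin n → ℂ) → ℂ}
    (hφ : ContDiff ℝ (⊤ : ℕ∞) φ) (hφc : HasCompactSupport φ) {ε : ℝ} (hε : 0 < ε) :
    ∫ z : Fin n → ℂ, (χ (‖z ⟨0, hn⟩‖ / ε) : ℂ) * dbarCoord j φ z / z ⟨0, hn⟩
      = 0 := by
  set e0 : Fin n := ⟨0, hn⟩
  have hgsm : ContDiff ℝ (⊤ : ℕ∞) (fun w : ℂ => (χ (‖w‖ / ε) : ℂ) * w⁻¹) :=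
    contDiff_g hχ hδ h0 hε
  have hu : ContDiff ℝ (⊤ : ℕ∞)
      (fun z : Fin n → ℂ => (χ (‖z e0‖ / ε) : ℂ) * (z e0)⁻¹) :=
    hgsm.comp (ContinuousLinearMap.proj (R := ℝ) (φ := fun _ : Fin n => ℂ) e0).contDiff
  have hGsm : ContDiff ℝ (⊤ : ℕ∞)
      (fun z : Fin n → ℂ => ((χ (‖z e0‖ / ε) : ℂ) * (z e0)⁻¹) * φ z) :=
    hu.mul hφ
  have hGc : HasCompactSupport
      (fun z : Fin n → ℂ => ((χ (‖z e0‖ / ε) : ℂ) * (z e0)⁻¹) * φ z) :=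
    hφc.mul_left
  have hzero := integral_dbarCoord_eq_zero j hGsm hGc
  rw [← hzero]
  congr 1
  funext z
  have hAd : Differentiable ℝ
      (fun z : Fin n → ℂ => (χ (‖z e0‖ / ε) : ℂ) * (z e0)⁻¹) :=
    hu.differentiable (by simp)
  have hφd : Differentiable ℝ φ := hφ.differentiable (by simp)
  have hgd : Differentiable ℝ (fun w : ℂ => (χ (‖w‖ / ε) : ℂ) * w⁻¹) :=
    hgsm.differentiable (by simp)
  rw [dbarCoord_mul j (hAd z) (hφd z),
    dbarCoord_comp_eval_ne (h := fun w : ℂ => (χ (‖w‖ / ε) : ℂ) * w⁻¹) hj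
      (hgd (z e0)), div_eq_mul_inv]
  ring

lemma part_a_integral {n : ℕ} (hn : 0 < n) {χ : ℝ → ℝ}
    (hχ1 : ∀ x : ℝ, 1 ≤ x → χ x = 1) {φ : (Fin n → ℂ) → ℂ}
    (hφ : ContDiff ℝ (⊤ : ℕ∞) φ) (hφc : HasCompactSupport φ) {c : ℝ} (hc : 0 < c)
    (hcs : ∀ z ∈ tsupport φ, c ≤ ‖z ⟨0, hn⟩‖)
    {ε : ℝ} (hε : 0 < ε) (hεc : ε < c) :
    ∫ z : Fin n → ℂ, (χ (‖z ⟨0, hn⟩‖ / ε) : ℂ) * dbarCoord ⟨0, hn⟩ φ z / z ⟨0, hn⟩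
      = 0 := by
  set e0 : Fin n := ⟨0, hn⟩
  have hopen : IsOpen {v : Fin n → ℂ | ‖v e0‖ < c} :=
    isOpen_lt (continuous_norm.comp (continuous_apply e0)) continuous_const
  have hφzero : ∀ v : Fin n → ℂ, ‖v e0‖ < c → φ v = 0 := by
    intro v hv
    by_contra h
    exact absurd (hcs v (subset_tsupport φ h)) (not_le.2 hv)
  -- G = φ * inv ∘ eval is smooth
  have hGsm : ContDiff ℝ (⊤ : ℕ∞) (fun z : Fin n → ℂ => φ z * (z e0)⁻¹) := by
    rw [contDiff_iff_contDiffAt]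
    intro z
    by_cases hz : ‖z e0‖ < c
    · apply ContDiffAt.congr_of_eventuallyEq contDiffAt_const
      filter_upwards [hopen.mem_nhds hz] with v hv
      rw [hφzero v hv, zero_mul]
    · have hz0 : z e0 ≠ 0 := by
        intro h
        apply hz
        simp only [h, norm_zero]
        exact hc
      have hproj : ContDiffAt ℝ (⊤ : ℕ∞) (fun z : Fin n → ℂ => z e0) z :=
        ((contDiff_pi.mp contDiff_id e0).contDiffAt)
      exact hφ.contDiffAt.mul ((contDiffAt_inv ℝ hz0).comp z hproj)
  have hGc : HasCompactSupport (fun z : Fin n → ℂ => φ z * (z e0)⁻¹) := hφc.mul_right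
  rw [← integral_dbarCoord_eq_zero e0 hGsm hGc]
  congr 1
  funext z
  by_cases hz : ‖z e0‖ < c
  · have hznot : z ∉ tsupport φ := fun h => absurd (hcs z h) (not_le.2 hz)
    have hφ0 : φ =ᶠ[nhds z] 0 := notMem_tsupport_iff_eventuallyEq.mp hznot
    have hG0 : (fun z : Fin n → ℂ => φ z * (z e0)⁻¹) =ᶠ[nhds z] 0 := by
      filter_upwards [hφ0] with v hv
      simp only [hv]
      simp
    rw [dbarCoord_eq_zero_of_eventually_zero e0 hφ0,
      dbarCoord_eq_zero_of_eventually_zero e0 hG0]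
    simp
  · push_neg at hz
    have hz0 : z e0 ≠ 0 := by
      intro h
      rw [h, norm_zero] at hz
      exact absurd hz (not_le.2 hc)
    have hχone : χ (‖z e0‖ / ε) = 1 := by
      apply hχ1
      rw [le_div_iff₀ hε]
      nlinarith
    have hinvd : DifferentiableAt ℝ (fun y : ℂ => y⁻¹) (z e0) :=
      ((hasDerivAt_inv hz0).differentiableAt).restrictScalars ℝ
    have hinvd' : DifferentiableAt ℝ (fun w : Fin n → ℂ => (w e0)⁻¹) z :=
      hinvd.comp z ((contDiff_pi.mp (contDiff_id (n := 1)) e0).differentiable one_ne_zero z)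
    rw [dbarCoord_mul e0 (hφ.differentiable (by simp) z) hinvd',
      dbarCoord_comp_eval_same (h := fun y : ℂ => y⁻¹) e0 hinvd,
      dbar1_inv hz0, hχone, div_eq_mul_inv]
    push_cast
    ring

lemma fderiv_a_bound {χ : ℝ → ℝ} (hχ : ContDiff ℝ (⊤ : ℕ∞) χ) {ε C : ℝ} (hε : 0 < ε)
    (hC : ∀ t ∈ Icc (0:ℝ) 1, |deriv χ t| ≤ C) {w : ℂ} (hw0 : w ≠ 0)
    (hwε : ‖w‖ ≤ ε) :
    DifferentiableAt ℝ (fun v : ℂ => (χ (‖v‖ / ε) : ℂ)) w ∧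
    ∀ v : ℂ, ‖fderiv ℝ (fun v : ℂ => (χ (‖v‖ / ε) : ℂ)) w v‖
      ≤ C / ε * ‖v‖ := by
  have hNdiff : DifferentiableAt ℝ (fun v : ℂ => ‖v‖) w :=
    (contDiffAt_norm ℝ (n := 1) hw0).differentiableAt (by simp)
  set N := fderiv ℝ (fun v : ℂ => ‖v‖) w with hN
  have hNfd : HasFDerivAt (fun v : ℂ => ‖v‖) N w := hNdiff.hasFDerivAt
  have hNle : ‖N‖ ≤ 1 := by
    simpa using norm_fderiv_le_of_lipschitz ℝ (lipschitzWith_one_norm (E := ℂ)) (x₀ := w)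
  have hm : HasFDerivAt (fun v : ℂ => ‖v‖ / ε) (ε⁻¹ • N) w := by
    simpa [div_eq_inv_mul] using hNfd.const_mul ε⁻¹
  have hχd : HasDerivAt χ (deriv χ (‖w‖ / ε)) (‖w‖ / ε) :=
    ((hχ.differentiable (by simp)) _).hasDerivAt
  have hcomp : HasFDerivAt (fun v : ℂ => χ (‖v‖ / ε)) (deriv χ (‖w‖ / ε) • (ε⁻¹ • N)) w :=
    hχd.comp_hasFDerivAt w hm
  have hful : HasFDerivAt (fun v : ℂ => (χ (‖v‖ / ε) : ℂ))
      (Complex.ofRealCLM.comp (deriv χ (‖w‖ / ε) • (ε⁻¹ • N))) w :=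
    Complex.ofRealCLM.hasFDerivAt.comp w hcomp
  have hCt : |deriv χ (‖w‖ / ε)| ≤ C := by
    apply hC
    constructor
    · positivity
    · rw [div_le_one hε]
      exact hwε
  refine ⟨hful.differentiableAt, ?_⟩
  intro v
  rw [hful.fderiv]
  show ‖(Complex.ofRealCLM.comp (deriv χ (‖w‖ / ε) • ε⁻¹ • N)) v‖ ≤ _
  simp only [ContinuousLinearMap.coe_comp', Function.comp_apply,
    ContinuousLinearMap.coe_smul', Pi.smul_apply, smul_eq_mul, Complex.ofRealCLM_apply]
  rw [Complex.norm_real]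
  have h1 : |deriv χ (‖w‖ / ε) * (ε⁻¹ * N v)| = |deriv χ (‖w‖ / ε)| * (ε⁻¹ * |N v|) := by
    rw [abs_mul, abs_mul, abs_of_nonneg (by positivity : (0:ℝ) ≤ ε⁻¹)]
  rw [Real.norm_eq_abs, h1]
  have h2 : |N v| ≤ ‖v‖ := by
    calc |N v| = ‖N v‖ := rfl
    _ ≤ ‖N‖ * ‖v‖ := N.le_opNorm v
    _ ≤ 1 * ‖v‖ := by gcongr
    _ = ‖v‖ := one_mul _
  have hfin : |deriv χ (‖w‖ / ε)| * (ε⁻¹ * |N v|) ≤ C * (ε⁻¹ * ‖v‖) := by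
    have h3 : (0:ℝ) ≤ ε⁻¹ := by positivity
    apply mul_le_mul hCt (by apply mul_le_mul_of_nonneg_left h2 (by positivity)) (by positivity) (le_trans (abs_nonneg _) hCt)
  exact hfin.trans_eq (by ring)

lemma dbar1_g_small {χ : ℝ → ℝ} {δ ε : ℝ} (h0 : ∀ x : ℝ, |x| < δ → χ x = 0)
    (hδ : 0 < δ) (hε : 0 < ε) {w : ℂ} (hw : ‖w‖ < δ * ε) :
    dbar1 (fun v : ℂ => (χ (‖v‖ / ε) : ℂ) * v⁻¹) w = 0 := by
  have hopen : IsOpen {v : ℂ | ‖v‖ < δ * ε} :=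
    isOpen_lt continuous_norm continuous_const
  rw [dbar1_congr (h2 := fun _ => (0:ℂ)) ?_, dbar1_const]
  filter_upwards [hopen.mem_nhds hw] with v hv
  rw [chi_zero_small h0 hε hv, Complex.ofReal_zero, zero_mul]

lemma dbar1_g_large {χ : ℝ → ℝ} {ε : ℝ} (hχ1 : ∀ x : ℝ, 1 ≤ x → χ x = 1)
    (hε : 0 < ε) {w : ℂ} (hw : ε < ‖w‖) :
    dbar1 (fun v : ℂ => (χ (‖v‖ / ε) : ℂ) * v⁻¹) w = 0 := by
  have hw0 : w ≠ 0 := by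
    intro h
    rw [h, norm_zero] at hw
    exact absurd hw (not_lt.2 hε.le)
  have hopen : IsOpen {v : ℂ | ε < ‖v‖} :=
    isOpen_lt continuous_const continuous_norm
  rw [dbar1_congr (h2 := fun v : ℂ => v⁻¹) ?_, dbar1_inv hw0]
  filter_upwards [hopen.mem_nhds hw] with v hv
  rw [hχ1 _ (by rw [le_div_iff₀ hε]; linarith [hv]), Complex.ofReal_one, one_mul]

lemma dbar1_g_bound {χ : ℝ → ℝ} (hχ : ContDiff ℝ (⊤ : ℕ∞) χ) {ε C : ℝ} (hε : 0 < ε)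
    (hC : ∀ t ∈ Icc (0:ℝ) 1, |deriv χ t| ≤ C) {w : ℂ} (hw0 : w ≠ 0)
    (hwε : ‖w‖ ≤ ε) :
    ‖dbar1 (fun v : ℂ => (χ (‖v‖ / ε) : ℂ) * v⁻¹) w‖
      ≤ C / ε / ‖w‖ := by
  obtain ⟨hadiff, habound⟩ := fderiv_a_bound hχ hε hC hw0 hwε
  have hinvd : DifferentiableAt ℝ (fun y : ℂ => y⁻¹) w :=
    ((hasDerivAt_inv hw0).differentiableAt).restrictScalars ℝ
  rw [dbar1_mul hadiff hinvd, dbar1_inv hw0, mul_zero, add_zero]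
  unfold dbar1
  set L := fderiv ℝ (fun v : ℂ => (χ (‖v‖ / ε) : ℂ)) w with hL
  rw [norm_mul, norm_inv]
  have hwpos : 0 < ‖w‖ := by
    simpa [norm_pos_iff] using hw0
  rw [div_eq_mul_inv (C / ε)]
  apply mul_le_mul_of_nonneg_right ?_ (by positivity)
  have h1 := habound 1
  rw [show ‖(1:ℂ)‖ = 1 from norm_one, mul_one] at h1
  have h2 := habound Complex.I
  rw [Complex.norm_I, mul_one] at h2
  have hhalf : ‖(1/2 : ℂ)‖ = 1/2 := by
    rw [norm_div, norm_one, Complex.norm_two]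
  have hadd : ‖L 1 + Complex.I * L Complex.I‖
      ≤ ‖L 1‖ + ‖L Complex.I‖ := by
    refine (norm_add_le _ _).trans ?_
    rw [norm_mul, Complex.norm_I, one_mul]
  rw [norm_mul, hhalf]
  linarith

lemma part_b_tendsto {n : ℕ} (hn : 0 < n) {χ : ℝ → ℝ} (hχ : ContDiff ℝ (⊤ : ℕ∞) χ)
    {δ : ℝ} (hδ : 0 < δ) (h0 : ∀ x : ℝ, |x| < δ → χ x = 0)
    (hχ1 : ∀ x : ℝ, 1 ≤ x → χ x = 1)
    {φ : (Fin n → ℂ) → ℂ} (hφ : ContDiff ℝ (⊤ : ℕ∞) φ) (hφc : HasCompactSupport φ) :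
    Tendsto (fun ε : ℝ => ∫ z : Fin n → ℂ,
        (χ (‖z ⟨0, hn⟩‖ / ε) : ℂ)
          * dbarCoord ⟨0, hn⟩ (fun w => (starRingEnd ℂ) (w ⟨0, hn⟩) * φ w) z / z ⟨0, hn⟩)
      (nhdsWithin 0 (Set.Ioi 0)) (nhds 0) := by
  set e0 : Fin n := ⟨0, hn⟩
  set H : (Fin n → ℂ) → ℂ := fun w => (starRingEnd ℂ) (w e0) * φ w with hH
  have hproj : ContDiff ℝ (⊤ : ℕ∞) (fun z : Fin n → ℂ => z e0) := contDiff_pi.mp contDiff_id e0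
  have hconj : ContDiff ℝ (⊤ : ℕ∞) (fun z : ℂ => (starRingEnd ℂ) z) := Complex.conjCLE.contDiff
  have hHsm : ContDiff ℝ (⊤ : ℕ∞) H := (hconj.comp hproj).mul hφ
  have hHc : HasCompactSupport H := hφc.mul_left
  -- constants
  obtain ⟨M, hM⟩ := hφc.exists_bound_of_continuous hφ.continuous
  have hM0 : 0 ≤ M := le_trans (norm_nonneg _) (hM (fun _ => 0))
  obtain ⟨C, hC⟩ := isCompact_Icc.exists_bound_of_continuousOn
      ((hχ.continuous_deriv (by simp)).continuousOn (s := Icc (0:ℝ) 1))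
  have hC' : ∀ t ∈ Icc (0:ℝ) 1, |deriv χ t| ≤ C := hC
  have hC0 : 0 ≤ C := le_trans (abs_nonneg _) (hC' 0 ⟨le_refl 0, zero_le_one⟩)
  obtain ⟨R, hR0, hKR⟩ : ∃ R : ℝ, 0 ≤ R ∧ tsupport φ ⊆ Metric.closedBall 0 R := by
    obtain ⟨r, hr⟩ := hφc.isBounded.subset_closedBall 0
    exact ⟨max r 0, le_max_right _ _,
      hr.trans (Metric.closedBall_subset_closedBall (le_max_left _ _))⟩
  set Q : ℝ := Real.pi * ((volume (Metric.closedBall (0:ℂ) R)).toReal) ^ (n - 1) with hQ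
  have hQ0 : 0 ≤ Q := by
    apply mul_nonneg Real.pi_pos.le
    positivity
  apply squeeze_zero_norm' (a := fun ε : ℝ => C * M * Q * ε) ?_ ?_
  · filter_upwards [self_mem_nhdsWithin] with ε (hε : (0:ℝ) < ε)
    set g : ℂ → ℂ := fun w => (χ (‖w‖ / ε) : ℂ) * w⁻¹ with hg
    have hgsm : ContDiff ℝ (⊤ : ℕ∞) g := contDiff_g hχ hδ h0 hε
    have hu : ContDiff ℝ (⊤ : ℕ∞) (fun z : Fin n → ℂ => g (z e0)) := hgsm.comp hproj
    have hgd : Differentiable ℝ g := hgsm.differentiable (by simp)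
    have hud : Differentiable ℝ (fun z : Fin n → ℂ => g (z e0)) := hu.differentiable (by simp)
    have hHd : Differentiable ℝ H := hHsm.differentiable (by simp)
    have key : ∀ z : Fin n → ℂ, dbarCoord e0 (fun z => g (z e0) * H z) z
        = dbar1 g (z e0) * H z + g (z e0) * dbarCoord e0 H z := by
      intro z
      rw [dbarCoord_mul e0 (hud z) (hHd z), dbarCoord_comp_eval_same (h := g) e0 (hgd (z e0))]
    have hGzero := integral_dbarCoord_eq_zero e0 (hu.mul hHsm) (hHc.mul_left)
    have hDcont : Continuous (fun z : Fin n → ℂ => dbar1 g (z e0)) := by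
      have h1 : Continuous (fderiv ℝ g) := hgsm.continuous_fderiv (by simp)
      have hdb : Continuous (dbar1 g) := by
        unfold dbar1
        exact continuous_const.mul ((h1.clm_apply continuous_const).add
          (continuous_const.mul (h1.clm_apply continuous_const)))
      exact hdb.comp (continuous_apply e0)
    have hDHint : Integrable (fun z : Fin n → ℂ => dbar1 g (z e0) * H z) volume :=
      (hDcont.mul hHsm.continuous).integrable_of_hasCompactSupport hHc.mul_left
    have hdbarHc : HasCompactSupport (dbarCoord e0 H) :=
      HasCompactSupport.intro hHc (fun z hz =>
        dbarCoord_eq_zero_of_eventually_zero e0 (notMem_tsupport_iff_eventuallyEq.mp hz))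
    have hdbarHcont : Continuous (dbarCoord e0 H) := by
      have h1 : Continuous (fderiv ℝ H) := hHsm.continuous_fderiv (by simp)
      unfold dbarCoord
      exact continuous_const.mul ((h1.clm_apply continuous_const).add
        (continuous_const.mul (h1.clm_apply continuous_const)))
    have hUHint : Integrable (fun z : Fin n → ℂ => g (z e0) * dbarCoord e0 H z) volume :=
      (hu.continuous.mul hdbarHcont).integrable_of_hasCompactSupport hdbarHc.mul_left
    have hsplit : (∫ z : Fin n → ℂ, dbar1 g (z e0) * H z)
        + (∫ z : Fin n → ℂ, g (z e0) * dbarCoord e0 H z) = 0 := by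
      rw [← integral_add hDHint hUHint, ← hGzero]
      congr 1
      funext z
      exact (key z).symm
    have hinteq : (fun z : Fin n → ℂ =>
        (χ (‖z e0‖ / ε) : ℂ) * dbarCoord e0 H z / z e0)
        = fun z : Fin n → ℂ => g (z e0) * dbarCoord e0 H z := by
      funext z
      show _ = (χ (‖z e0‖ / ε) : ℂ) * (z e0)⁻¹ * dbarCoord e0 H z
      rw [div_eq_mul_inv]
      ring
    show ‖∫ z : Fin n → ℂ,
        (χ (‖z e0‖ / ε) : ℂ) * dbarCoord e0 H z / z e0‖ ≤ C * M * Q * ε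
    rw [show (∫ z : Fin n → ℂ,
        (χ (‖z e0‖ / ε) : ℂ) * dbarCoord e0 H z / z e0)
      = ∫ z : Fin n → ℂ, g (z e0) * dbarCoord e0 H z by rw [← hinteq]]
    have hval : (∫ z : Fin n → ℂ, g (z e0) * dbarCoord e0 H z)
        = - ∫ z : Fin n → ℂ, dbar1 g (z e0) * H z := by
      have := hsplit
      linear_combination this
    rw [hval, norm_neg]
    set A : Set (Fin n → ℂ) := {z : Fin n → ℂ | ‖z e0‖ ≤ ε} ∩ tsupport φ with hA
    have hAzero : ∀ z ∉ A, dbar1 g (z e0) * H z = 0 := by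
      intro z hz
      by_cases h1 : ‖z e0‖ ≤ ε
      · have h2 : z ∉ tsupport φ := fun hmem => hz ⟨h1, hmem⟩
        have hφz : φ z = 0 := image_eq_zero_of_notMem_tsupport h2
        simp [hH, hφz]
      · rw [dbar1_g_large hχ1 hε (not_le.mp h1), zero_mul]
    rw [← setIntegral_eq_integral_of_forall_compl_eq_zero hAzero]
    have hAmeas : MeasurableSet A :=
      ((isClosed_le (continuous_norm.comp (continuous_apply e0))
        continuous_const).measurableSet).inter (isClosed_tsupport φ).measurableSet
    have hAfin : volume A < ⊤ :=
      lt_of_le_of_lt (measure_mono inter_subset_right) hφc.measure_lt_top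
    have hbound : ∀ z ∈ A, ‖dbar1 g (z e0) * H z‖ ≤ C * M / ε := by
      rintro z ⟨hz1, hz2⟩
      by_cases hzero : ‖z e0‖ < δ * ε
      · rw [dbar1_g_small h0 hδ hε hzero, zero_mul, norm_zero]
        positivity
      · have hz0 : z e0 ≠ 0 := by
          intro h
          apply hzero
          rw [h, norm_zero]
          positivity
        have hwpos : 0 < ‖z e0‖ := by
          simpa [norm_pos_iff] using hz0
        have hb : ‖dbar1 g (z e0)‖ ≤ C / ε / ‖z e0‖ := by
          exact dbar1_g_bound hχ hε hC' hz0 hz1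
        have hHn : ‖H z‖ ≤ ‖z e0‖ * M := by
          rw [hH]
          simp only [norm_mul, RCLike.norm_conj]
          exact mul_le_mul_of_nonneg_left (hM z) (norm_nonneg _)
        rw [norm_mul]
        calc ‖dbar1 g (z e0)‖ * ‖H z‖
            ≤ (C / ε / ‖z e0‖) * (‖z e0‖ * M) := by
              apply mul_le_mul hb hHn (norm_nonneg _) (by positivity)
          _ = C * M / ε := by
              field_simp
    have hnorm1 : ‖∫ z in A, dbar1 g (z e0) * H z‖ ≤ (C * M / ε) * (volume A).toReal :=
      norm_setIntegral_le_of_norm_le_const hAfin hbound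
    set P : Set (Fin n → ℂ) := Set.univ.pi
      (fun i => if i = e0 then Metric.closedBall (0:ℂ) ε else Metric.closedBall (0:ℂ) R)
      with hP
    have hsub : A ⊆ P := by
      rintro z ⟨hz1, hz2⟩ i -
      show z i ∈ if i = e0 then Metric.closedBall (0:ℂ) ε else Metric.closedBall (0:ℂ) R
      by_cases hi : i = e0
      · subst hi
        rw [if_pos rfl, Metric.mem_closedBall, dist_zero_right]
        exact hz1
      · rw [if_neg hi, Metric.mem_closedBall, dist_zero_right]
        have hzR : ‖z‖ ≤ R := by
          have := hKR hz2
          rwa [Metric.mem_closedBall, dist_zero_right] at this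
        exact (norm_le_pi_norm z i).trans hzR
    have hPvol : volume P = volume (Metric.closedBall (0:ℂ) ε)
        * (volume (Metric.closedBall (0:ℂ) R)) ^ (n - 1) := by
      rw [hP, volume_pi_pi, ← Finset.mul_prod_erase Finset.univ _ (Finset.mem_univ e0),
        if_pos rfl]
      congr 1
      have hstep : ∀ i ∈ Finset.univ.erase e0,
          volume (if i = e0 then Metric.closedBall (0:ℂ) ε else Metric.closedBall (0:ℂ) R)
            = volume (Metric.closedBall (0:ℂ) R) :=
        fun i hi => congrArg volume (if_neg (Finset.ne_of_mem_erase hi))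
      rw [Finset.prod_congr rfl hstep, Finset.prod_const,
        Finset.card_erase_of_mem (Finset.mem_univ e0), Finset.card_univ, Fintype.card_fin]
    have hPfin : volume P < ⊤ := by
      rw [hPvol]
      exact ENNReal.mul_lt_top measure_closedBall_lt_top
        (ENNReal.pow_lt_top measure_closedBall_lt_top)
    have hAle : (volume A).toReal ≤ ε ^ 2 * Q := by
      have h1 : (volume A).toReal ≤ (volume P).toReal :=
        ENNReal.toReal_mono hPfin.ne (measure_mono hsub)
      have h2 : (volume P).toReal
          = (ε ^ 2 * Real.pi) * ((volume (Metric.closedBall (0:ℂ) R)).toReal) ^ (n - 1) := by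
        rw [hPvol, ENNReal.toReal_mul, ENNReal.toReal_pow, Complex.volume_closedBall,
          ENNReal.toReal_mul, ENNReal.toReal_pow, ENNReal.toReal_ofReal hε.le,
          ENNReal.coe_toReal, NNReal.coe_real_pi]
      rw [h2] at h1
      calc (volume A).toReal
          ≤ (ε ^ 2 * Real.pi) * ((volume (Metric.closedBall (0:ℂ) R)).toReal) ^ (n - 1) := h1
        _ = ε ^ 2 * Q := by rw [hQ]; ring
    calc ‖∫ z in A, dbar1 g (z e0) * H z‖
        ≤ (C * M / ε) * (volume A).toReal := hnorm1
      _ ≤ (C * M / ε) * (ε ^ 2 * Q) := by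
          apply mul_le_mul_of_nonneg_left hAle (by positivity)
      _ = C * M * Q * ε := by
          field_simp
  · have h := (continuous_const.mul continuous_id).tendsto (0:ℝ)
      (f := fun ε : ℝ => (C * M * Q) * ε)
    simp only [mul_zero, id] at h
    exact h.mono_left nhdsWithin_le_nhds

/-- Dimension-principle ingredients for the elementary residue current `∂̄(1/z₁)` on `ℂⁿ`
(defined via `⟨∂̄(1/z₁), ψ⟩ = −lim_ε ∫ χ(|z₁|/ε) (∂ψ/∂z̄₁)/z₁`):
(a) its support is contained in `{z₁ = 0}`;
(b) `z̄₁ · ∂̄(1/z₁) = 0`;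
(c) `dz̄₁ ∧ ∂̄(1/z₁) = 0`, i.e. all components `∂_{z̄_j}(1/z₁)` with `j ≠ 1` vanish. -/
theorem elementary_residue_current_dimension_principle
    (n : ℕ) (hn : 0 < n)
    (χ : ℝ → ℝ) (hχ : ContDiff ℝ (⊤ : ℕ∞) χ)
    (hχ0 : ∃ δ > (0:ℝ), ∀ x : ℝ, |x| < δ → χ x = 0)
    (hχ1 : ∀ x : ℝ, 1 ≤ x → χ x = 1) :
    -- (a) support in {z₁ = 0}
    (∀ φ : (Fin n → ℂ) → ℂ, ContDiff ℝ (⊤ : ℕ∞) φ → HasCompactSupport φ →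
        tsupport φ ⊆ {z : Fin n → ℂ | z ⟨0, hn⟩ ≠ 0} →
        Tendsto (fun ε : ℝ => ∫ z : Fin n → ℂ,
            (χ (‖z ⟨0, hn⟩‖ / ε) : ℂ) * dbarCoord ⟨0, hn⟩ φ z / z ⟨0, hn⟩)
          (nhdsWithin 0 (Set.Ioi 0)) (nhds 0)) ∧
    -- (b) z̄₁ · ∂̄(1/z₁) = 0
    (∀ φ : (Fin n → ℂ) → ℂ, ContDiff ℝ (⊤ : ℕ∞) φ → HasCompactSupport φ →
        Tendsto (fun ε : ℝ => ∫ z : Fin n → ℂ,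
            (χ (‖z ⟨0, hn⟩‖ / ε) : ℂ)
              * dbarCoord ⟨0, hn⟩ (fun w => (starRingEnd ℂ) (w ⟨0, hn⟩) * φ w) z
              / z ⟨0, hn⟩)
          (nhdsWithin 0 (Set.Ioi 0)) (nhds 0)) ∧
    -- (c) dz̄₁ ∧ ∂̄(1/z₁) = 0: the components in the directions j ≠ 1 vanish
    (∀ j : Fin n, j ≠ ⟨0, hn⟩ →
      ∀ φ : (Fin n → ℂ) → ℂ, ContDiff ℝ (⊤ : ℕ∞) φ → HasCompactSupport φ →
        Tendsto (fun ε : ℝ => ∫ z : Fin n → ℂ,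
            (χ (‖z ⟨0, hn⟩‖ / ε) : ℂ) * dbarCoord j φ z / z ⟨0, hn⟩)
          (nhdsWithin 0 (Set.Ioi 0)) (nhds 0)) := by
  obtain ⟨δ, hδ, h0⟩ := hχ0
  refine ⟨?_, ?_, ?_⟩
  · intro φ hφ hφc hsupp
    obtain ⟨c, hc0, hcs⟩ : ∃ c : ℝ, 0 < c ∧
        ∀ z ∈ tsupport φ, c ≤ ‖z ⟨0, hn⟩‖ := by
      rcases (tsupport φ).eq_empty_or_nonempty with h | h
      · exact ⟨1, one_pos, by simp [h]⟩
      · obtain ⟨z0, hz0K, hmin⟩ := (hφc : IsCompact (tsupport φ)).exists_isMinOn h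
          ((continuous_norm.comp (continuous_apply ⟨0, hn⟩)).continuousOn)
        refine ⟨‖z0 ⟨0, hn⟩‖, ?_, fun z hz => isMinOn_iff.mp hmin z hz⟩
        have h1 : z0 ⟨0, hn⟩ ≠ 0 := hsupp hz0K
        simpa [norm_pos_iff] using h1
    apply Tendsto.congr' ?_ tendsto_const_nhds
    filter_upwards [Ioo_mem_nhdsGT_of_mem (Set.mem_Ico.mpr ⟨le_refl 0, hc0⟩)] with ε hε
    exact (part_a_integral hn hχ1 hφ hφc hc0 hcs hε.1 hε.2).symm
  · intro φ hφ hφc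
    exact part_b_tendsto hn hχ hδ h0 hχ1 hφ hφc
  · intro j hj φ hφ hφc
    apply Tendsto.congr' ?_ tendsto_const_nhds
    filter_upwards [self_mem_nhdsWithin] with ε hε
    exact (part_c_integral hn hχ hδ h0 hj hφ hφc hε).symm
end

section
/- If [c] ∈ H^p(X, 𝒪) and [c'] ∈ H^q(X, ℱ) are Čech cohomology classes represented by cocycles c, c' for a Leray cover 𝒱 with subordinate partition of unity (χα), then the Dolbeault-type representative of the cup product [c] ∪ [c'] given by Σ χ_{ν_{p+q}} ∂̄χ_{ν₀} ∧ ⋯ ∧ ∂̄χ_{ν_{p+q−1}} · c_{ν₀⋯ν_p} · c'_{ν_p⋯ν_{p+q}} equals the wedge product φ ∧ φ' of the individual Dolbeault representatives φ = Σ χ_{ν_p} ∂̄χ_{ν₀}∧⋯∧∂̄χ_{ν_{p−1}} c_{ν₀⋯ν_p} and φ' = Σ χ_{ν_q} ∂̄χ_{ν₀}∧⋯∧∂̄χ_{ν_{q−1}} ∧ c'_{ν₀⋯ν_q}, where sums are over all multi-indices. -/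
open Function

/-- The ordered product `∂̄χ_{ν₀} ∧ ⋯ ∧ ∂̄χ_{ν_{m−1}}` of the `(0,1)`-forms `d ν_i`
attached to a multi-index `ν : Fin (m+1) → ι` (the last index is not differentiated). -/
def prodDbar {ι Λ : Type*} [Monoid Λ] {m : ℕ} (d : ι → Λ) (ν : Fin (m + 1) → ι) : Λ :=
  (List.ofFn fun i : Fin m => d (ν i.castSucc)).prod

/-- Alternating Čech cochains. -/
def IsAltCech {ι M : Type*} [AddCommGroup M] {m : ℕ} (c : (Fin m → ι) → M) : Prop :=
  ∀ (v : Fin m → ι) (σ : Equiv.Perm (Fin m)), c (v ∘ σ) = (Equiv.Perm.sign σ : ℤ) • c v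

/-- Čech cocycle condition `δc = 0`. -/
def IsCocycle {ι M : Type*} [AddCommGroup M] {m : ℕ} (c : (Fin (m + 1) → ι) → M) : Prop :=
  ∀ v : Fin (m + 2) → ι,
    ∑ i : Fin (m + 2), ((-1 : ℤ) ^ (i : ℕ)) • c (fun j => v (i.succAbove j)) = 0

/-!
Fix an index `b`. Expanding `c_{ν₀⋯ν_{p-1}ν_p}` by the cocycle relation on
`(ν₀, …, ν_p, b)` leaves `c_{ν₀⋯ν_{p-1}b}` plus terms each of which is independent of some
`ν_i` with `i < p`; summing `∂̄χ_{ν_i}` over that index kills them, since `Σ ∂̄χ_α = 0`. Then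
`Σ χ_{ν_p} = 1` gives `φ = Σ ∂̄χ_{ν₀} ∧ ⋯ ∧ ∂̄χ_{ν_{p-1}} c_{ν₀⋯ν_{p-1}b}`. Taking `b = ν'₀`
inside `φ ∧ φ'` and concatenating the multi-indices `(ν₀, …, ν_{p-1})` and `(ν'₀, …, ν'_q)`
produces exactly the representative of the cup product. Only the finitely many indices in the
supports of `χ` and `∂̄χ` contribute, so all sums may be taken over a finite index type.
-/

theorem Fin.comp_insertNth {α β : Type*} {n : ℕ} (f : α → β) (i : Fin (n + 1)) (x : α)
    (e : Fin n → α) : f ∘ Fin.insertNth i x e = Fin.insertNth i (f x) (f ∘ e) := by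
  ext j
  cases j using Fin.succAboveCases i <;> simp

theorem Fin.removeNth_castSucc_snoc_snoc {α : Type*} {n : ℕ} (ρ : Fin n → α) (a b : α) :
    Fin.removeNth (Fin.last n).castSucc (Fin.snoc (Fin.snoc ρ a) b : Fin (n + 2) → α)
      = Fin.snoc ρ b := by
  ext j
  induction j using Fin.lastCases with
  | last => simp [Fin.removeNth]
  | cast j => simp [Fin.removeNth, Fin.succAbove_of_castSucc_lt, Fin.castSucc_lt_castSucc_iff]

theorem Fin.append_comp_castLE_eq_snoc {α : Type*} {p q : ℕ} (ρ : Fin p → α)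
    (τ : Fin (q + 1) → α) (h : p + 1 ≤ p + q + 1) :
    (fun i => Fin.append ρ τ (Fin.castLE h i) : Fin (p + 1) → α) = Fin.snoc ρ (τ 0) := by
  ext i
  induction i using Fin.lastCases with
  | last => rw [Fin.snoc_last]; exact Fin.append_right ρ τ 0
  | cast i => rw [Fin.snoc_castSucc]; exact Fin.append_left ρ τ i

theorem Fin.append_apply_last {α : Type*} {p q : ℕ} (ρ : Fin p → α) (τ : Fin (q + 1) → α) :
    Fin.append (m := p) ρ τ (Fin.last (p + q)) = τ (Fin.last q) :=
  Fin.append_right ρ τ (Fin.last q)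

theorem Fin.append_apply_mk_add {α : Type*} {p n : ℕ} (ρ : Fin p → α) (τ : Fin n → α)
    (i : Fin n) (h : p + i < p + n) : Fin.append ρ τ ⟨p + i, h⟩ = τ i :=
  Fin.append_right ρ τ i

theorem List.exists_prod_ofFn_insertNth_eq_mul {M : Type*} [Monoid M] :
    ∀ {n : ℕ} (i : Fin (n + 1)) (e : Fin n → M),
      ∃ a b : M, ∀ x, (List.ofFn (Fin.insertNth i x e)).prod = a * x * b
  | n, i, e => by
    induction i using Fin.cases with
    | zero => exact ⟨1, (List.ofFn e).prod, fun x => by simp⟩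
    | succ i =>
      cases n with
      | zero => exact i.elim0
      | succ n =>
        obtain ⟨a, b, hab⟩ := exists_prod_ofFn_insertNth_eq_mul i (Fin.tail e)
        refine ⟨e 0 * a, b, fun x => ?_⟩
        rw [← Fin.cons_self_tail e, Fin.insertNth_succ_cons, List.ofFn_cons, List.prod_cons,
          hab, Fin.cons_zero]
        simp only [mul_assoc]

theorem sum_mul_prod_ofFn_eq_zero_of_update {β Λ : Type*} [Fintype β] [Ring Λ] {d : β → Λ}
    (hd : ∑ t, d t = 0) {m : ℕ} (i : Fin m) (F : (Fin m → β) → Λ)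
    (hF : ∀ σ t, F (update σ i t) = F σ) :
    ∑ σ : Fin m → β, F σ * (List.ofFn (d ∘ σ)).prod = 0 := by
  cases m with
  | zero => exact i.elim0
  | succ n =>
    rw [← (Fin.insertNthEquiv (fun _ => β) i).sum_comp, Fintype.sum_prod_type, Finset.sum_comm]
    refine Finset.sum_eq_zero fun ρ _ => ?_
    rcases isEmpty_or_nonempty β with hβ | ⟨⟨t₀⟩⟩
    · simp
    obtain ⟨a, b, hab⟩ := List.exists_prod_ofFn_insertNth_eq_mul i (d ∘ ρ)
    have hFt : ∀ t, F (Fin.insertNth i t ρ) = F (Fin.insertNth i t₀ ρ) := fun t => by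
      rw [← hF (Fin.insertNth i t₀ ρ) t, Fin.update_insertNth]
    simp only [Fin.insertNthEquiv, Equiv.coe_fn_mk, hFt, Fin.comp_insertNth, hab]
    rw [← Finset.mul_sum, ← Finset.sum_mul, ← Finset.mul_sum, hd, mul_zero, zero_mul, mul_zero]

theorem IsCocycle.apply_snoc_eq {ι M : Type*} [AddCommGroup M] {p : ℕ}
    {c : (Fin (p + 1) → ι) → M} (hc : IsCocycle c) (ρ : Fin p → ι) (a b : ι) :
    c (Fin.snoc ρ a) = c (Fin.snoc ρ b)
      + ∑ i : Fin p, (-1 : ℤ) ^ (p + (i : ℕ)) •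
          c (Fin.removeNth i.castSucc.castSucc (Fin.snoc (Fin.snoc ρ a) b : Fin (p + 2) → ι)) := by
  have h := hc (Fin.snoc (Fin.snoc ρ a) b)
  simp only [Fin.sum_univ_castSucc, Fin.val_castSucc, Fin.val_last, ← Fin.removeNth_apply] at h
  rw [Fin.removeNth_castSucc_snoc_snoc, Fin.removeNth_last, Fin.init_snoc, pow_succ] at h
  have hsq : (-1 : ℤ) ^ p * (-1) ^ p = 1 := by rw [← mul_pow]; norm_num
  simp only [pow_add, mul_smul, ← Finset.smul_sum]
  linear_combination (norm := module)
    -((-1 : ℤ) ^ p • h) - hsq • (c (Fin.snoc ρ a) - c (Fin.snoc ρ b))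

theorem IsCocycle.comp {β ι M : Type*} [AddCommGroup M] {p : ℕ}
    {c : (Fin (p + 1) → ι) → M} (hc : IsCocycle c) (f : β → ι) :
    IsCocycle fun ν : Fin (p + 1) → β => c (f ∘ ν) :=
  fun v => hc (f ∘ v)

section prodDbar

variable {ι Λ : Type*}

theorem prodDbar_snoc [Monoid Λ] (d : ι → Λ) {m : ℕ} (ρ : Fin m → ι) (a : ι) :
    prodDbar d (Fin.snoc ρ a : Fin (m + 1) → ι) = (List.ofFn (d ∘ ρ)).prod := by
  simp [prodDbar, Function.comp_def]

theorem prodDbar_eq_zero [MonoidWithZero Λ] (d : ι → Λ) {m : ℕ} (ν : Fin (m + 1) → ι)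
    (i : Fin m) (hi : d (ν i.castSucc) = 0) : prodDbar d ν = 0 :=
  List.prod_eq_zero (List.mem_ofFn.mpr ⟨i, hi⟩)

theorem prodDbar_append [Monoid Λ] (d : ι → Λ) {p q : ℕ} (ρ : Fin p → ι) (τ : Fin (q + 1) → ι) :
    prodDbar (m := p + q) d (Fin.append (m := p) ρ τ)
      = (List.ofFn (d ∘ ρ)).prod * prodDbar d τ := by
  rw [prodDbar, List.ofFn_add, List.prod_append]
  congr 3
  · funext i; exact congrArg d (Fin.append_left ρ τ i)
  · funext j; exact congrArg d (Fin.append_right ρ τ j.castSucc)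

end prodDbar

section FiniteCover

variable {β A Λ : Type*} [Fintype β] [CommRing A] [Ring Λ] [Algebra A Λ]
  {χ : β → A} {d : β → Λ}

theorem sum_mul_prodDbar_eq_sum_snoc (hχ : ∑ α, χ α = 1) (hd : ∑ α, d α = 0) {p : ℕ}
    {c : (Fin (p + 1) → β) → A} (hc : IsCocycle c) (b : β) :
    ∑ ν : Fin (p + 1) → β, algebraMap A Λ (χ (ν (Fin.last p)) * c ν) * prodDbar d ν
      = ∑ ρ : Fin p → β, algebraMap A Λ (c (Fin.snoc ρ b)) * (List.ofFn (d ∘ ρ)).prod := by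
  set faces : β → (Fin p → β) → A := fun a ρ => ∑ i : Fin p, (-1 : ℤ) ^ (p + (i : ℕ)) •
    c (Fin.removeNth i.castSucc.castSucc (Fin.snoc (Fin.snoc ρ a) b : Fin (p + 2) → β))
  have hexpand : ∀ a ρ, algebraMap A Λ (χ a * c (Fin.snoc ρ a)) * (List.ofFn (d ∘ ρ)).prod
      = algebraMap A Λ (χ a) * (algebraMap A Λ (c (Fin.snoc ρ b)) * (List.ofFn (d ∘ ρ)).prod)
        + algebraMap A Λ (χ a * faces a ρ) * (List.ofFn (d ∘ ρ)).prod := fun a ρ => by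
    rw [hc.apply_snoc_eq ρ a b, mul_add, map_add, add_mul, map_mul, mul_assoc]
  have hfaces : ∀ a, ∑ ρ, algebraMap A Λ (χ a * faces a ρ) * (List.ofFn (d ∘ ρ)).prod = 0 := by
    intro a
    simp only [faces, Finset.mul_sum, map_sum, Finset.sum_mul]
    rw [Finset.sum_comm]
    exact Finset.sum_eq_zero fun i _ => sum_mul_prod_ofFn_eq_zero_of_update hd i _
      fun ρ t => by simp only [Fin.snoc_update, Fin.removeNth_update]
  rw [← (Fin.snocEquiv fun _ => β).sum_comp, Fintype.sum_prod_type]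
  simp only [Fin.snocEquiv, Equiv.coe_fn_mk, Fin.snoc_last, prodDbar_snoc, hexpand,
    Finset.sum_add_distrib, hfaces, add_zero, ← Finset.mul_sum]
  rw [← Finset.sum_mul, ← map_sum, hχ, map_one, one_mul]

theorem dolbeault_mul_eq_cup_of_fintype (hχ : ∑ α, χ α = 1) (hd : ∑ α, d α = 0) {p q : ℕ}
    {c : (Fin (p + 1) → β) → A} (c' : (Fin (q + 1) → β) → Λ) (hc : IsCocycle c) :
    (∑ ν : Fin (p + 1) → β, algebraMap A Λ (χ (ν (Fin.last p)) * c ν) * prodDbar d ν)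
      * (∑ ν : Fin (q + 1) → β, algebraMap A Λ (χ (ν (Fin.last q))) * prodDbar d ν * c' ν)
      = ∑ ν : Fin (p + q + 1) → β,
          algebraMap A Λ (χ (ν (Fin.last (p + q)))
              * c (fun i : Fin (p + 1) =>
                  ν (Fin.castLE (Nat.add_le_add_right (Nat.le_add_right p q) 1) i)))
            * prodDbar d ν
            * c' (fun i : Fin (q + 1) => ν ⟨p + (i : ℕ), Nat.add_lt_add_left i.isLt p⟩) := by
  symm
  refine ((Fin.appendEquiv p (q + 1)).sum_comp _).symm.trans ?_
  rw [Fintype.sum_prod_type, Finset.sum_comm, Finset.mul_sum]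
  refine Finset.sum_congr rfl fun τ _ => ?_
  rw [sum_mul_prodDbar_eq_sum_snoc hχ hd hc (τ 0), Finset.sum_mul]
  refine Finset.sum_congr rfl fun ρ _ => ?_
  simp only [Fin.appendEquiv, Equiv.coe_fn_mk, Fin.append_apply_last,
    Fin.append_comp_castLE_eq_snoc, prodDbar_append, Fin.append_apply_mk_add, map_mul,
    ← mul_assoc]
  rw [mul_assoc (algebraMap A Λ _), Algebra.commutes]

end FiniteCover

theorem finsum_pi_eq_sum_subtype {ι M : Type*} [AddCommMonoid M] {m : ℕ} (S : Finset ι)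
    (F : (Fin m → ι) → M) (hF : ∀ ν, F ν ≠ 0 → ∀ i, ν i ∈ S) :
    ∑ᶠ ν, F ν = ∑ σ : Fin m → S, F fun j => σ j := by
  rw [finsum_eq_sum_of_support_subset F (s := Fintype.piFinset fun _ => S)
      fun ν hν => Fintype.mem_piFinset.mpr (hF ν hν)]
  exact Finset.sum_bij' (fun ν hν j => ⟨ν j, Fintype.mem_piFinset.mp hν j⟩) (fun σ _ j => σ j)
    (by simp) (by simp) (by simp) (by simp) (by simp)

theorem finsum_eq_sum_subtype_of_vanishing {ι R Λ M : Type*} [Zero R] [MonoidWithZero Λ]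
    [AddCommMonoid M] [DecidableEq ι] {χ : ι → R} {d : ι → Λ}
    (hχ : (support χ).Finite) (hd : (support d).Finite) {m : ℕ} (F : (Fin (m + 1) → ι) → M)
    (hFχ : ∀ ν, χ (ν (Fin.last m)) = 0 → F ν = 0) (hFd : ∀ ν, prodDbar d ν = 0 → F ν = 0) :
    ∑ᶠ ν, F ν = ∑ σ : Fin (m + 1) → ↥(hχ.toFinset ∪ hd.toFinset), F fun j => σ j := by
  refine finsum_pi_eq_sum_subtype _ F fun ν hν i => ?_
  induction i using Fin.lastCases with
  | last => exact Finset.mem_union_left _ (hχ.mem_toFinset.mpr fun h => hν (hFχ ν h))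
  | cast i =>
    exact Finset.mem_union_right _
      (hd.mem_toFinset.mpr fun h => hν (hFd ν (prodDbar_eq_zero d ν i h)))

/-- Compatibility of the explicit Čech-to-Dolbeault map with the cup product: working in
the (graded-commutative) algebra `Λ` of forms over the ring `A` of functions, with
partition of unity `χ` (`Σχ_α = 1`), anticommuting `(0,1)`-forms `d α = ∂̄χ_α`
(`Σ d α = 0`), and alternating cocycles `c ∈ C^p(𝒱,𝒪)`, `c' ∈ C^q(𝒱,ℱ)`, the wedge
`φ ∧ φ'` of the Dolbeault representatives
`φ = Σ χ_{ν_p} ∂̄χ_{ν₀}∧⋯∧∂̄χ_{ν_{p−1}} c_{ν₀⋯ν_p}` and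
`φ' = Σ χ_{ν_q} ∂̄χ_{ν₀}∧⋯∧∂̄χ_{ν_{q−1}} ∧ c'_{ν₀⋯ν_q}` equals the Dolbeault
representative of the cup product `c ∪ c'`. -/
theorem cech_dolbeault_cup_product {ι A Λ : Type*} [CommRing A] [Ring Λ] [Algebra A Λ]
    (χ : ι → A) (d : ι → Λ)
    (hχfin : (Function.support χ).Finite) (hdfin : (Function.support d).Finite)
    (hχsum : ∑ᶠ α : ι, χ α = 1) (hdsum : ∑ᶠ α : ι, d α = 0)
    (p q : ℕ)
    (c : (Fin (p + 1) → ι) → A) (c' : (Fin (q + 1) → ι) → Λ)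
    (hccoc : IsCocycle c) :
    (∑ᶠ ν : Fin (p + 1) → ι,
        algebraMap A Λ (χ (ν (Fin.last p)) * c ν) * prodDbar d ν)
      * (∑ᶠ ν : Fin (q + 1) → ι,
        algebraMap A Λ (χ (ν (Fin.last q))) * prodDbar d ν * c' ν)
      = ∑ᶠ ν : Fin (p + q + 1) → ι,
          algebraMap A Λ
              (χ (ν (Fin.last (p + q)))
                * c (fun i : Fin (p + 1) => ν (Fin.castLE (by omega) i)))
            * prodDbar d ν
            * c' (fun i : Fin (q + 1) => ν ⟨p + (i : ℕ), by omega⟩) := by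
  classical
  set T := hχfin.toFinset ∪ hdfin.toFinset
  have hχT : ∑ α : T, χ α = 1 := by
    rw [Finset.sum_coe_sort, ← finsum_eq_sum_of_support_subset χ fun α h => by simp [T, h],
      hχsum]
  have hdT : ∑ α : T, d α = 0 := by
    rw [Finset.sum_coe_sort, ← finsum_eq_sum_of_support_subset d fun α h => by simp [T, h],
      hdsum]
  iterate 3
    rw [finsum_eq_sum_subtype_of_vanishing hχfin hdfin _ (fun ν h => by simp [h])
      (fun ν h => by simp [h])]
  exact dolbeault_mul_eq_cup_of_fintype hχT hdT _ (hccoc.comp Subtype.val)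
end
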